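/- arXiv:1806.10788 — 3 statements merged into one kernel-verified Lean document; each statement's English description precedes it below -/
import Mathlib

section
/- Let 0 < q ≤ 1, let x, x̂ ∈ ℝⁿ, and set v = x̂ - x. Let T ⊆ {1,…,n} and let K ⊆ T be the index set of the k largest-in-magnitude coefficients of x restricted to T. If ‖x̂_T‖_q^q ≤ ‖x_T‖_q^q, then ‖v_{T∩Kᶜ}‖_q^q ≤ 2σ_k(x_T)_q^q + ‖v_{T∩K}‖_q^q. -/
open Finset Matrix

/-- `x` restricted to index set `S` (zero outside `S`). -/
noncomputable def restr {n : ℕ} (S : Finset (Fin n)) (x : Fin n → ℝ) : Fin n → ℝ :=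
  fun j => if j ∈ S then x j else 0

/-- The `ℓ_p` (quasi)norm `(∑ |x_j|^p)^{1/p}`. -/
noncomputable def lnorm {n : ℕ} (p : ℝ) (x : Fin n → ℝ) : ℝ :=
  (∑ j, |x j| ^ p) ^ (1 / p)

/-- The `q`-th power of the `ℓ_q` quasinorm, `∑ |x_j|^q`. -/
noncomputable def lqq {n : ℕ} (q : ℝ) (x : Fin n → ℝ) : ℝ :=
  ∑ j, |x j| ^ q

/-- `K ⊆ T` is an index set of `k` largest-in-magnitude coefficients of `x` on `T`. -/
def IsLargest {n : ℕ} (x : Fin n → ℝ) (T K : Finset (Fin n)) (k : ℕ) : Prop :=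
  K ⊆ T ∧ K.card = k ∧ ∀ i ∈ K, ∀ j ∈ T \ K, |x j| ≤ |x i|

/-- Number of nonzero entries (the `ℓ_0` "norm"). -/
noncomputable def spt {n : ℕ} (x : Fin n → ℝ) : ℕ := (Function.support x).ncard

/-- `t`-truncated `(l_r,l_q)-l_p` sparse approximation property of order `k`
with constants `D` and `β`. -/
def TruncSAP {m n : ℕ} (A : Matrix (Fin m) (Fin n) ℝ) (t k : ℕ) (r q p D β : ℝ) : Prop :=
  ∀ (x : Fin n → ℝ) (T K : Finset (Fin n)), T.card = t → IsLargest x T K k →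
    lnorm r (restr K x) ^ q ≤
      D * lnorm p (A.mulVec x) ^ q + β * (k : ℝ) ^ (q / r - 1) * lqq q (restr (T \ K) x)

lemma real_rpow_add_le {q : ℝ} (hq0 : 0 ≤ q) (hq1 : q ≤ 1) {a b : ℝ} (ha : 0 ≤ a)
    (hb : 0 ≤ b) : (a + b) ^ q ≤ a ^ q + b ^ q := by
  have h := NNReal.rpow_add_le_add_rpow a.toNNReal b.toNNReal hq0 hq1
  have := NNReal.coe_le_coe.mpr h
  push_cast [NNReal.coe_rpow, Real.coe_toNNReal _ ha, Real.coe_toNNReal _ hb] at this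
  simpa using this

lemma abs_rpow_sub_le {q : ℝ} (hq0 : 0 < q) (hq1 : q ≤ 1) (a b : ℝ) :
    |a| ^ q - |b| ^ q ≤ |a + b| ^ q := by
  have h1 : |a| ≤ |a + b| + |b| := by
    calc |a| = |(a + b) + (-b)| := by ring_nf
    _ ≤ |a + b| + |(-b)| := abs_add_le _ _
    _ = |a + b| + |b| := by rw [abs_neg]
  have h2 : |a| ^ q ≤ (|a + b| + |b|) ^ q :=
    Real.rpow_le_rpow (abs_nonneg _) h1 hq0.le
  have h3 := real_rpow_add_le hq0.le hq1 (abs_nonneg (a + b)) (abs_nonneg b)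
  linarith

lemma lqq_restr {n : ℕ} {q : ℝ} (hq0 : 0 < q) (S : Finset (Fin n)) (y : Fin n → ℝ) :
    lqq q (restr S y) = ∑ j ∈ S, |y j| ^ q := by
  unfold lqq restr
  rw [← Finset.sum_filter_add_sum_filter_not Finset.univ (· ∈ S)]
  have h1 : ∀ j ∈ Finset.univ.filter (· ∈ S),
      |(if j ∈ S then y j else 0)| ^ q = |y j| ^ q := by
    intro j hj; simp at hj; simp [hj]
  have h2 : ∀ j ∈ Finset.univ.filter (¬ · ∈ S),
      |(if j ∈ S then y j else 0)| ^ q = 0 := by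
    intro j hj; simp at hj; simp [hj, Real.zero_rpow hq0.ne']
  rw [Finset.sum_congr rfl h1, Finset.sum_congr rfl h2, Finset.sum_const_zero, add_zero]
  congr 1
  ext j; simp

/-- cone constraint from minimality of the truncated `ℓ_q` objective. -/
theorem stmt0 {n : ℕ} (q : ℝ) (hq0 : 0 < q) (hq1 : q ≤ 1)
    (x xhat v : Fin n → ℝ) (hv : v = xhat - x)
    (T K : Finset (Fin n)) (k : ℕ) (hK : IsLargest x T K k)
    (h : lqq q (restr T xhat) ≤ lqq q (restr T x)) :
    lqq q (restr (T \ K) v) ≤ 2 * lqq q (restr (T \ K) x) + lqq q (restr (T ∩ K) v) := by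
  obtain ⟨hKT, -, -⟩ := hK
  have hTK : T ∩ K = K := Finset.inter_eq_right.mpr hKT
  rw [lqq_restr hq0, lqq_restr hq0, hTK, lqq_restr hq0]
  rw [lqq_restr hq0, lqq_restr hq0] at h
  -- split sums over T
  have hsplit : ∀ y : Fin n → ℝ,
      ∑ j ∈ T, |y j| ^ q = (∑ j ∈ T \ K, |y j| ^ q) + ∑ j ∈ K, |y j| ^ q := by
    intro y; exact (Finset.sum_sdiff hKT).symm
  rw [hsplit xhat, hsplit x] at h
  have hA : ∑ j ∈ K, |x j| ^ q - ∑ j ∈ K, |v j| ^ q ≤ ∑ j ∈ K, |xhat j| ^ q := by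
    rw [← Finset.sum_sub_distrib]
    refine Finset.sum_le_sum fun j _ => ?_
    have : xhat j = x j + v j := by rw [hv]; simp
    rw [this]
    exact abs_rpow_sub_le hq0 hq1 (x j) (v j)
  have hB : ∑ j ∈ T \ K, |v j| ^ q - ∑ j ∈ T \ K, |x j| ^ q
      ≤ ∑ j ∈ T \ K, |xhat j| ^ q := by
    rw [← Finset.sum_sub_distrib]
    refine Finset.sum_le_sum fun j _ => ?_
    have : xhat j = v j + x j := by rw [hv]; ring_nf; simp
    rw [this]
    exact abs_rpow_sub_le hq0 hq1 (v j) (x j)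
  linarith
end

section
/- Let 0 < p, q ≤ ∞. Suppose that for every x ∈ ℝⁿ, every ε ≥ 0, and η ≥ ε, any minimizer x̂ of min{‖u_T‖_q^q : ‖Au − b‖_p ≤ η} with b = Ax + z, ‖z‖_p ≤ ε, satisfies ‖x̂ − x‖_p^q ≤ B₁(ε+η)^q + B₂ k^{q/p−1}σ_k(x_T)_q^q with constants B₁, B₂ independent of ε, η, x. Then for every x ∈ ℝⁿ, ‖x‖_p^q ≤ B₁‖Ax‖_p^q + B₂ k^{q/p−1}σ_k(x_T)_q^q; in particular A satisfies the t-truncated (l_p,l_q)–l_p sparse approximation property of order k with constants B₁ and B₂. -/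
open Finset Matrix

/-- The `q`-th power of the `ℓ_q` error of best `k`-term approximation of `x`
restricted to `T`. -/
noncomputable def sigmaK {n : ℕ} (q : ℝ) (k : ℕ) (T : Finset (Fin n)) (x : Fin n → ℝ) : ℝ :=
  sInf ((fun K => lqq q (restr (T \ K) x)) '' {K : Finset (Fin n) | K ⊆ T ∧ K.card = k})

/-- a uniform error bound for minimizers of the truncated `ℓ_q`
minimization forces the truncated sparse approximation property. -/
theorem stmt10 {m n : ℕ} (A : Matrix (Fin m) (Fin n) ℝ)
    (p q : ℝ) (hp : 0 < p) (hq : 0 < q)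
    (T : Finset (Fin n)) (k : ℕ) (B₁ B₂ : ℝ)
    (H : ∀ (x : Fin n → ℝ) (z : Fin m → ℝ) (ε η : ℝ), 0 ≤ ε → ε ≤ η → lnorm p z ≤ ε →
      ∀ xhat : Fin n → ℝ,
        lnorm p (A.mulVec xhat - (A.mulVec x + z)) ≤ η →
        (∀ u : Fin n → ℝ, lnorm p (A.mulVec u - (A.mulVec x + z)) ≤ η →
          lqq q (restr T xhat) ≤ lqq q (restr T u)) →
        lnorm p (xhat - x) ^ q ≤
          B₁ * (ε + η) ^ q + B₂ * (k : ℝ) ^ (q / p - 1) * sigmaK q k T x) :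
    ∀ x : Fin n → ℝ,
      lnorm p x ^ q ≤
        B₁ * lnorm p (A.mulVec x) ^ q + B₂ * (k : ℝ) ^ (q / p - 1) * sigmaK q k T x := by
  intro x
  have hA0 : A.mulVec (0 : Fin n → ℝ) = 0 := Matrix.mulVec_zero A
  have hnn : 0 ≤ lnorm p (A.mulVec x) :=
    Real.rpow_nonneg (Finset.sum_nonneg fun j _ => Real.rpow_nonneg (abs_nonneg _) p) _
  have hz : lnorm p (0 : Fin m → ℝ) ≤ 0 := by
    simp [lnorm, Real.zero_rpow hp.ne',
      Real.zero_rpow (by positivity : (p⁻¹ : ℝ) ≠ 0)]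
  have hfeas : lnorm p (A.mulVec 0 - (A.mulVec x + 0)) ≤ lnorm p (A.mulVec x) := by
    have h : A.mulVec (0 : Fin n → ℝ) - (A.mulVec x + 0) = -(A.mulVec x) := by
      simp [hA0]
    rw [h]
    simp [lnorm]
  have hmin : ∀ u : Fin n → ℝ,
      lnorm p (A.mulVec u - (A.mulVec x + 0)) ≤ lnorm p (A.mulVec x) →
      lqq q (restr T (0 : Fin n → ℝ)) ≤ lqq q (restr T u) := by
    intro u _
    have h0 : lqq q (restr T (0 : Fin n → ℝ)) = 0 := by
      simp [lqq, restr, Real.zero_rpow hq.ne']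
    rw [h0]
    exact Finset.sum_nonneg fun j _ => Real.rpow_nonneg (abs_nonneg _) q
  have key := H x 0 0 (lnorm p (A.mulVec x)) le_rfl hnn hz 0 hfeas hmin
  have hx : lnorm p ((0 : Fin n → ℝ) - x) = lnorm p x := by
    simp [lnorm]
  rw [hx, zero_add] at key
  exact key
end

section
/- Let α > 0, s a positive integer, and let u ∈ ℝᵈ satisfy ‖u‖₁ ≤ sα and ‖u‖_∞ ≤ α. Then u can be written as a convex combination u = Σ_{j=1}^N ρ_j u^j with ρ_j ≥ 0, Σρ_j = 1, where each u^j is s-sparse, supp(u^j) ⊆ supp(u), ‖u^j‖₁ = ‖u‖₁, and ‖u^j‖_∞ ≤ α. -/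
open Finset

section SparsePolytopeAux

variable {d : ℕ}

private noncomputable def supF (u : Fin d → ℝ) : Finset (Fin d) :=
  Finset.univ.filter (fun k => u k ≠ 0)

private noncomputable def Af (α : ℝ) (u : Fin d → ℝ) : Finset (Fin d) :=
  Finset.univ.filter (fun k => |u k| = α)

private lemma support_eq (u : Fin d → ℝ) : Function.support u = ↑(supF u) := by
  ext k; simp [supF, Function.mem_support]

private lemma Af_subset_supF {α : ℝ} (hα : 0 < α) (u : Fin d → ℝ) : Af α u ⊆ supF u := by
  intro k hk
  simp only [Af, mem_filter, mem_univ, true_and] at hk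
  simp only [supF, mem_filter, mem_univ, true_and]
  intro h; rw [h] at hk; simp at hk; linarith

private def Concl (α : ℝ) (s : ℕ) (u : Fin d → ℝ) : Prop :=
  ∃ (N : ℕ) (ρ : Fin N → ℝ) (w : Fin N → Fin d → ℝ),
      (∀ j, 0 ≤ ρ j) ∧ (∑ j, ρ j = 1) ∧ (u = ∑ j, ρ j • w j) ∧
        ∀ j, (Function.support (w j)).ncard ≤ s ∧
          Function.support (w j) ⊆ Function.support u ∧
          (∑ i, |w j i| = ∑ i, |u i|) ∧ ∀ i, |w j i| ≤ α

private lemma concl_of_sparse (α : ℝ) (s : ℕ) (u : Fin d → ℝ)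
    (hcard : (supF u).card ≤ s) (hinf : ∀ j, |u j| ≤ α) : Concl α s u := by
  refine ⟨1, fun _ => 1, fun _ => u, fun _ => zero_le_one, by simp, by simp, fun _ => ?_⟩
  refine ⟨?_, subset_rfl, rfl, hinf⟩
  rw [support_eq, Set.ncard_coe_finset]; exact hcard

private lemma concl_combine (α : ℝ) (s : ℕ) (u v₁ v₂ : Fin d → ℝ) (lam : ℝ)
    (h0 : 0 ≤ lam) (h1 : lam ≤ 1)
    (huv : u = lam • v₁ + (1 - lam) • v₂)
    (hs1 : Function.support v₁ ⊆ Function.support u)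
    (hs2 : Function.support v₂ ⊆ Function.support u)
    (hn1 : ∑ i, |v₁ i| = ∑ i, |u i|) (hn2 : ∑ i, |v₂ i| = ∑ i, |u i|)
    (hc1 : Concl α s v₁) (hc2 : Concl α s v₂) : Concl α s u := by
  obtain ⟨N₁, ρ₁, w₁, hρ₁, hsum₁, hu₁, hw₁⟩ := hc1
  obtain ⟨N₂, ρ₂, w₂, hρ₂, hsum₂, hu₂, hw₂⟩ := hc2
  refine ⟨N₁ + N₂, Fin.addCases (fun k => lam * ρ₁ k) (fun k => (1 - lam) * ρ₂ k),
    Fin.addCases w₁ w₂, ?_, ?_, ?_, ?_⟩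
  · intro j; refine Fin.addCases ?_ ?_ j <;> intro k <;>
      simp only [Fin.addCases_left, Fin.addCases_right]
    · exact mul_nonneg h0 (hρ₁ k)
    · exact mul_nonneg (by linarith) (hρ₂ k)
  · rw [Fin.sum_univ_add]
    simp only [Fin.addCases_left, Fin.addCases_right, ← Finset.mul_sum, hsum₁, hsum₂]
    ring
  · rw [Fin.sum_univ_add]
    simp only [Fin.addCases_left, Fin.addCases_right]
    rw [huv, hu₁, hu₂, Finset.smul_sum, Finset.smul_sum]
    simp only [smul_smul]
  · intro j; refine Fin.addCases ?_ ?_ j <;> intro k <;>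
      simp only [Fin.addCases_left, Fin.addCases_right]
    · obtain ⟨a, b, c, e⟩ := hw₁ k; exact ⟨a, b.trans hs1, c.trans hn1, e⟩
    · obtain ⟨a, b, c, e⟩ := hw₂ k; exact ⟨a, b.trans hs2, c.trans hn2, e⟩

private noncomputable def shiftV (u : Fin d → ℝ) (i j : Fin d) (ε : ℝ) : Fin d → ℝ :=
  fun k => if k = i then u i - ε * Real.sign (u i)
    else if k = j then u j + ε * Real.sign (u j) else u k

private lemma abs_sub_sign {x ε : ℝ} (hx : x ≠ 0) (h0 : 0 ≤ ε) (h1 : ε ≤ |x|) :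
    |x - ε * Real.sign x| = |x| - ε := by
  rcases hx.lt_or_gt with h | h
  · rw [Real.sign_of_neg h]; rw [abs_of_neg h] at h1 ⊢
    rw [abs_of_nonpos (by linarith)]; ring
  · rw [Real.sign_of_pos h]; rw [abs_of_pos h] at h1 ⊢
    rw [abs_of_nonneg (by linarith)]; ring

private lemma abs_add_sign {x ε : ℝ} (hx : x ≠ 0) (h0 : 0 ≤ ε) :
    |x + ε * Real.sign x| = |x| + ε := by
  rcases hx.lt_or_gt with h | h
  · rw [Real.sign_of_neg h, abs_of_neg h, abs_of_nonpos (by linarith)]; ring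
  · rw [Real.sign_of_pos h, abs_of_pos h, abs_of_nonneg (by linarith)]; ring

private lemma shiftV_spec {α : ℝ} {u : Fin d → ℝ} {i j : Fin d} {ε : ℝ}
    (hij : i ≠ j) (hi0 : u i ≠ 0) (hj0 : u j ≠ 0) (hiα : |u i| < α) (hjα : |u j| < α)
    (hε0 : 0 < ε) (hεi : ε ≤ |u i|) (hεj : ε ≤ α - |u j|)
    (hend : ε = |u i| ∨ ε = α - |u j|) (hinf : ∀ k, |u k| ≤ α) :
    (∑ k, |shiftV u i j ε k| = ∑ k, |u k|) ∧
    supF (shiftV u i j ε) ⊆ supF u ∧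
    (∀ k, |shiftV u i j ε k| ≤ α) ∧
    2 * (supF (shiftV u i j ε)).card - (Af α (shiftV u i j ε)).card <
      2 * (supF u).card - (Af α u).card := by
  set v := shiftV u i j ε with hv
  have hvi : v i = u i - ε * Real.sign (u i) := by simp [hv, shiftV]
  have hvj : v j = u j + ε * Real.sign (u j) := by simp [hv, shiftV, hij.symm]
  have hvo : ∀ k, k ≠ i → k ≠ j → v k = u k := by
    intro k h1 h2; simp [hv, shiftV, h1, h2]
  have habsi : |v i| = |u i| - ε := by rw [hvi, abs_sub_sign hi0 hε0.le hεi]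
  have habsj : |v j| = |u j| + ε := by rw [hvj, abs_add_sign hj0 hε0.le]
  have hsum : ∑ k, |v k| = ∑ k, |u k| := by
    have h1 : ∀ k : Fin d, |v k| = |u k| +
        ((if k = i then -ε else 0) + (if k = j then ε else 0)) := by
      intro k
      by_cases h1 : k = i
      · subst h1; rw [habsi, if_pos rfl, if_neg hij]; ring
      · by_cases h2 : k = j
        · subst h2; rw [habsj, if_neg h1, if_pos rfl]; ring
        · rw [hvo k h1 h2, if_neg h1, if_neg h2]; ring
    rw [Finset.sum_congr rfl (fun k _ => h1 k), Finset.sum_add_distrib,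
      Finset.sum_add_distrib]
    simp
  have hss : supF v ⊆ supF u := by
    intro k hk
    simp only [supF, mem_filter, mem_univ, true_and] at hk ⊢
    by_cases h1 : k = i
    · subst h1; exact hi0
    · by_cases h2 : k = j
      · subst h2; exact hj0
      · rw [hvo k h1 h2] at hk; exact hk
  have hiv : ∀ k, |v k| ≤ α := by
    intro k
    by_cases h1 : k = i
    · subst h1; rw [habsi]; linarith
    · by_cases h2 : k = j
      · subst h2; rw [habsj]; linarith
      · rw [hvo k h1 h2]; exact hinf k
  refine ⟨hsum, hss, hiv, ?_⟩
  have hα : 0 < α := lt_of_le_of_lt (abs_nonneg _) hiα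
  have hAsub : Af α u ⊆ Af α v := by
    intro k hk
    simp only [Af, mem_filter, mem_univ, true_and] at hk ⊢
    have h1 : k ≠ i := by intro h; subst h; exact absurd hk hiα.ne
    have h2 : k ≠ j := by intro h; subst h; exact absurd hk hjα.ne
    rw [hvo k h1 h2]; exact hk
  have c1 := Finset.card_le_card hAsub
  have c2 := Finset.card_le_card (Af_subset_supF hα v)
  have c3 := Finset.card_le_card hss
  have c4 := Finset.card_le_card (Af_subset_supF hα u)
  rcases hend with he | he
  · have hvi0 : v i = 0 := by
      rw [hvi, he]
      rcases hi0.lt_or_gt with h | h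
      · rw [Real.sign_of_neg h, abs_of_neg h]; ring
      · rw [Real.sign_of_pos h, abs_of_pos h]; ring
    have hiu : i ∈ supF u := by simp [supF, hi0]
    have hiv' : i ∉ supF v := by simp [supF, hvi0]
    have hlt : (supF v).card < (supF u).card :=
      Finset.card_lt_card ⟨hss, fun h => hiv' (h hiu)⟩
    omega
  · have hjv : j ∈ Af α v := by
      simp only [Af, mem_filter, mem_univ, true_and]
      rw [habsj]; linarith
    have hju : j ∉ Af α u := by
      simp only [Af, mem_filter, mem_univ, true_and]
      exact hjα.ne
    have hgrow : (Af α u).card < (Af α v).card :=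
      Finset.card_lt_card ⟨hAsub, fun h => hju (h hjv)⟩
    omega

private lemma key (α : ℝ) (hα : 0 < α) (s : ℕ) (hs : 0 < s) :
    ∀ n : ℕ, ∀ u : Fin d → ℝ,
      2 * (supF u).card - (Af α u).card ≤ n →
      (∑ k, |u k|) ≤ s * α → (∀ k, |u k| ≤ α) → Concl α s u := by
  intro n
  induction n with
  | zero =>
    intro u hn h1 hinf
    have c := Finset.card_le_card (Af_subset_supF hα u)
    have : (supF u).card = 0 := by omega
    exact concl_of_sparse α s u (by omega) hinf
  | succ n ih =>
    intro u hn h1 hinf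
    by_cases hk : (supF u).card ≤ s
    · exact concl_of_sparse α s u hk hinf
    push_neg at hk
    -- Af α u has at most s - 1 elements
    have hAsum : ∑ k ∈ Af α u, |u k| = (Af α u).card * α := by
      rw [Finset.sum_congr rfl (fun k hk => ?_), Finset.sum_const, nsmul_eq_mul]
      exact (Finset.mem_filter.mp hk).2
    have hAle : ∑ k ∈ Af α u, |u k| ≤ ∑ k, |u k| :=
      Finset.sum_le_sum_of_subset_of_nonneg (Finset.subset_univ _)
        (fun k _ _ => abs_nonneg _)
    have hAcard : (Af α u).card ≤ s := by
      have : ((Af α u).card : ℝ) * α ≤ (s : ℝ) * α := by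
        rw [← hAsum]; exact hAle.trans h1
      exact_mod_cast le_of_mul_le_mul_right this hα
    have hAlt : (Af α u).card < s := by
      rcases lt_or_eq_of_le hAcard with h | h
      · exact h
      · exfalso
        have hzero : ∀ k ∈ (Finset.univ \ Af α u), |u k| = 0 := by
          rw [← Finset.sum_eq_zero_iff_of_nonneg (fun k _ => abs_nonneg (u k))]
          have hsplit : ∑ k ∈ Finset.univ \ Af α u, |u k| + ∑ k ∈ Af α u, |u k|
              = ∑ k, |u k| := Finset.sum_sdiff (Finset.subset_univ _)
          have hge : (s : ℝ) * α ≤ ∑ k ∈ Af α u, |u k| := by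
            rw [hAsum, h]
          have hle0 : ∑ k ∈ Finset.univ \ Af α u, |u k| ≤ 0 := by linarith
          have hge0 : 0 ≤ ∑ k ∈ Finset.univ \ Af α u, |u k| :=
            Finset.sum_nonneg (fun k _ => abs_nonneg _)
          linarith
        have hsub : supF u ⊆ Af α u := by
          intro k hk2
          by_contra hk3
          have := hzero k (Finset.mem_sdiff.mpr ⟨Finset.mem_univ k, hk3⟩)
          simp only [supF, mem_filter, mem_univ, true_and] at hk2
          exact hk2 (abs_eq_zero.mp this)
        have := Finset.card_le_card hsub
        omega
    -- find two indices
    have hsubAS : Af α u ⊆ supF u := Af_subset_supF hα u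
    have hcardSD : 1 < (supF u \ Af α u).card := by
      rw [Finset.card_sdiff_of_subset hsubAS]; omega
    obtain ⟨i, hi, j, hj, hij⟩ := Finset.one_lt_card.mp hcardSD
    rw [Finset.mem_sdiff] at hi hj
    have hi0 : u i ≠ 0 := by
      have := hi.1; simpa [supF] using this
    have hj0 : u j ≠ 0 := by
      have := hj.1; simpa [supF] using this
    have hiα : |u i| < α := by
      have : |u i| ≠ α := by
        intro h; exact hi.2 (by simp [Af, h])
      exact lt_of_le_of_ne (hinf i) this
    have hjα : |u j| < α := by
      have : |u j| ≠ α := by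
        intro h; exact hj.2 (by simp [Af, h])
      exact lt_of_le_of_ne (hinf j) this
    have hi0' : 0 < |u i| := abs_pos.mpr hi0
    have hj0' : 0 < |u j| := abs_pos.mpr hj0
    set ε := min |u i| (α - |u j|) with hε
    set δ := min (α - |u i|) |u j| with hδ
    have hε0 : 0 < ε := lt_min hi0' (by linarith)
    have hδ0 : 0 < δ := lt_min (by linarith) hj0'
    have spec1 := shiftV_spec (α := α) hij hi0 hj0 hiα hjα hε0
      (min_le_left _ _) (min_le_right _ _) (min_choice _ _) hinf
    have spec2 := shiftV_spec (α := α) hij.symm hj0 hi0 hjα hiα hδ0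
      (min_le_right _ _) (min_le_left _ _) (min_choice _ _).symm hinf
    obtain ⟨hn1, hss1, hinf1, hm1⟩ := spec1
    obtain ⟨hn2, hss2, hinf2, hm2⟩ := spec2
    set v₁ := shiftV u i j ε with hv₁
    set v₂ := shiftV u j i δ with hv₂
    have hne : ε + δ ≠ 0 := by positivity
    set lam := δ / (ε + δ) with hlam
    have hlam0 : 0 ≤ lam := by positivity
    have hlam1 : lam ≤ 1 := by
      rw [hlam, div_le_one (by positivity)]; linarith
    have e1i : v₁ i = u i - ε * Real.sign (u i) := by simp [hv₁, shiftV]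
    have e1j : v₁ j = u j + ε * Real.sign (u j) := by simp [hv₁, shiftV, hij.symm]
    have e2i : v₂ i = u i + δ * Real.sign (u i) := by simp [hv₂, shiftV, hij]
    have e2j : v₂ j = u j - δ * Real.sign (u j) := by simp [hv₂, shiftV]
    have huv : u = lam • v₁ + (1 - lam) • v₂ := by
      funext k
      simp only [Pi.add_apply, Pi.smul_apply, smul_eq_mul]
      by_cases hki : k = i
      · subst hki; rw [e1i, e2i, hlam]; field_simp; ring
      · by_cases hkj : k = j
        · subst hkj; rw [e1j, e2j, hlam]; field_simp; ring
        · have o1 : v₁ k = u k := by simp [hv₁, shiftV, hki, hkj]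
          have o2 : v₂ k = u k := by simp [hv₂, shiftV, hki, hkj]
          rw [o1, o2, hlam]; field_simp; ring
    have hc1 : Concl α s v₁ := ih v₁ (by omega) (hn1 ▸ h1) hinf1
    have hc2 : Concl α s v₂ := ih v₂ (by omega) (hn2 ▸ h1) hinf2
    exact concl_combine α s u v₁ v₂ lam hlam0 hlam1 huv
      (by rw [support_eq, support_eq]; exact_mod_cast hss1)
      (by rw [support_eq, support_eq]; exact_mod_cast hss2)
      hn1 hn2 hc1 hc2

end SparsePolytopeAux

/-- sparse representation of a polytope (Cai–Zhang). -/
theorem stmt13 {d : ℕ} (α : ℝ) (hα : 0 < α) (s : ℕ) (hs : 0 < s)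
    (u : Fin d → ℝ) (h1 : ∑ j, |u j| ≤ s * α) (hinf : ∀ j, |u j| ≤ α) :
    ∃ (N : ℕ) (ρ : Fin N → ℝ) (w : Fin N → Fin d → ℝ),
      (∀ j, 0 ≤ ρ j) ∧ (∑ j, ρ j = 1) ∧ (u = ∑ j, ρ j • w j) ∧
        ∀ j, (Function.support (w j)).ncard ≤ s ∧
          Function.support (w j) ⊆ Function.support u ∧
          (∑ i, |w j i| = ∑ i, |u i|) ∧ ∀ i, |w j i| ≤ α :=
  key α hα s hs (2 * (supF u).card - (Af α u).card) u le_rfl h1 hinf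
end
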